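/- arXiv:2510.08494 — 4 statements merged into one kernel-verified Lean document; each statement's English description precedes it below -/
import Mathlib

section
/- For f(a) = Σ_{i=1}^k Π_{j=1}^p (1_{a_j=i} − 1/k), if the tuple a ∈ [k]^p contains at least 2 distinct values, then |f(a)| ≤ 2/k. -/
/-!
Removing a coordinate `a_j` leaves a tuple `a'` with `f(a) = P(a') - f(a') / k`, where `P(a')` is
the summand of `f(a')` for the value `a_j`. Every factor of `P(a')` has modulus at most `1`, and a
coordinate of `a'` different from `a_j` contributes the factor `-1/k`, so then `|P(a')| ≤ 1/k`.
Removing a coordinate other than two that carry distinct values keeps the hypothesis, so induction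
on the length gives `|f(a)| ≤ 1/k + 2/k² ≤ 2/k`, starting from `f = 0` on tuples of length one.
-/

open Finset

noncomputable def fcom (k p : ℕ) (a : Fin p → Fin k) : ℝ :=
  ∑ i : Fin k, ∏ j : Fin p, ((if a j = i then (1 : ℝ) else 0) - 1 / (k : ℝ))

noncomputable def centeredProd (k p : ℕ) (a : Fin p → Fin k) (i : Fin k) : ℝ :=
  ∏ j : Fin p, ((if a j = i then (1 : ℝ) else 0) - 1 / (k : ℝ))

lemma abs_indicator_sub_one_div_le_one (k : ℕ) (b : Prop) [Decidable b] :
    |(if b then (1 : ℝ) else 0) - 1 / (k : ℝ)| ≤ 1 := by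
  have h₀ : (0 : ℝ) ≤ 1 / k := by positivity
  have h₁ : 1 / (k : ℝ) ≤ 1 := by simpa only [one_div] using Nat.cast_inv_le_one k
  rw [abs_le]
  split_ifs <;> constructor <;> linarith

lemma abs_centeredProd_le {k p : ℕ} (a : Fin p → Fin k) (i : Fin k) (h : ∃ j, a j ≠ i) :
    |centeredProd k p a i| ≤ 1 / k := by
  obtain ⟨j, hj⟩ := h
  have hrest : |∏ l ∈ univ.erase j, ((if a l = i then (1 : ℝ) else 0) - 1 / (k : ℝ))| ≤ 1 := by
    rw [abs_prod]
    exact prod_le_one (fun _ _ => abs_nonneg _)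
      (fun _ _ => abs_indicator_sub_one_div_le_one _ _)
  rw [centeredProd, ← mul_prod_erase _ _ (mem_univ j), abs_mul, if_neg hj, zero_sub, abs_neg,
    abs_of_nonneg (by positivity)]
  exact mul_le_of_le_one_right (by positivity) hrest

lemma fcom_one {k : ℕ} (hk : k ≠ 0) (a : Fin 1 → Fin k) : fcom k 1 a = 0 := by
  simp [fcom, sum_sub_distrib, hk]

lemma fcom_succ {k p : ℕ} (a : Fin (p + 1) → Fin k) (j : Fin (p + 1)) :
    fcom k (p + 1) a =
      centeredProd k p (a ∘ j.succAbove) (a j) - 1 / k * fcom k p (a ∘ j.succAbove) := by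
  simp only [fcom, centeredProd, Fin.prod_univ_succAbove _ j, sub_mul, sum_sub_distrib, ite_mul,
    one_mul, zero_mul, sum_ite_eq, mem_univ, if_true, mul_sum, Function.comp_apply]

lemma abs_fcom_succ_le {k p : ℕ} (hk : 2 ≤ k) (a : Fin (p + 1) → Fin k) (j : Fin (p + 1))
    (hne : ∃ l, a (j.succAbove l) ≠ a j) (hrest : |fcom k p (a ∘ j.succAbove)| ≤ 2 / k) :
    |fcom k (p + 1) a| ≤ 2 / k := by
  have hk' : (2 : ℝ) ≤ k := by exact_mod_cast hk
  have hq : (0 : ℝ) ≤ 1 / k := by positivity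
  calc |fcom k (p + 1) a|
      ≤ |centeredProd k p (a ∘ j.succAbove) (a j)| + 1 / k * |fcom k p (a ∘ j.succAbove)| := by
        rw [fcom_succ a j]
        exact (abs_sub _ _).trans_eq (by rw [abs_mul, abs_of_nonneg hq])
    _ ≤ 1 / (k : ℝ) + 1 / k * 1 := by
        gcongr
        · exact abs_centeredProd_le _ _ hne
        · exact hrest.trans ((div_le_one (by positivity)).2 hk')
    _ = 2 / k := by ring

lemma Fin.exists_succAbove_ne_of_ne {α : Type*} {n : ℕ} (a : Fin (n + 3) → α)
    {i i' : Fin (n + 3)} (h : a i ≠ a i') :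
    ∃ (j : Fin (n + 3)) (x y : Fin (n + 2)), a (j.succAbove x) ≠ a (j.succAbove y) := by
  obtain ⟨j, hji, hji'⟩ := Fin.exists_ne_and_ne_of_two_lt i i' (by omega)
  obtain ⟨x, rfl⟩ := Fin.exists_succAbove_eq hji.symm
  obtain ⟨y, rfl⟩ := Fin.exists_succAbove_eq hji'.symm
  exact ⟨j, x, y, h⟩

lemma abs_fcom_le_of_ne {k : ℕ} (hk : 2 ≤ k) :
    ∀ (n : ℕ) (a : Fin (n + 2) → Fin k) (i i' : Fin (n + 2)), a i ≠ a i' →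
      |fcom k (n + 2) a| ≤ 2 / k
  | 0, a, i, i', h => by
    obtain ⟨x, rfl⟩ := Fin.exists_succAbove_eq (ne_of_apply_ne a h).symm
    refine abs_fcom_succ_le hk a i ⟨x, h.symm⟩ ?_
    rw [fcom_one (by omega), abs_zero]
    positivity
  | n + 1, a, _, _, h => by
    obtain ⟨j, x, y, hxy⟩ := Fin.exists_succAbove_ne_of_ne a h
    refine abs_fcom_succ_le hk a j ?_ (abs_fcom_le_of_ne hk n _ x y hxy)
    rcases hxy.ne_or_ne (a j) with hx | hy
    · exact ⟨x, hx⟩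
    · exact ⟨y, hy⟩

/-- If the tuple `a` contains at least two distinct values, then `|f(a)| ≤ 2/k`. -/
theorem stmt8 (k p : ℕ) (hk : 2 ≤ k) (hp : 2 ≤ p) (a : Fin p → Fin k)
    (ha : ∃ i j : Fin p, a i ≠ a j) :
    |fcom k p a| ≤ 2 / (k : ℝ) := by
  obtain ⟨n, rfl⟩ := Nat.exists_eq_add_of_le' hp
  obtain ⟨i, j, hij⟩ := ha
  exact abs_fcom_le_of_ne hk n a i j hij
end

section
/- For x uniform in [k]^n and any p-subset S of [n], the second moment of f(x_S) equals μ = ((k−1)^p + (−1)^p (k−1)) / k^{2p−1}, where f(a) = Σ_{i=1}^k Π_{j=1}^p (1_{a_j=i} − 1/k). -/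
/-!
Write `φᵢ(a) = 1_{a = i} − 1/k`, so that `f(x_S) = ∑ᵢ ∏_{j ∈ S} φᵢ(x_j)`. Expanding the square and
using that the coordinates of `x` are independent, each pair `(i, i')` contributes
`(∑ₐ φᵢ(a) φᵢ'(a))^p · k^(n-p) = (1_{i = i'} − 1/k)^p · k^(n-p)`. Summing over the `k` diagonal
and `k(k − 1)` off-diagonal pairs gives `k((1 − 1/k)^p + (k − 1)(−1/k)^p) · k^(n-p)`.
-/

open Finset

/-- `f(x_S) = ∑_{i=1}^k ∏_{j ∈ S} (1_{x_j=i} − 1/k)`, the symmetric function `f`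
applied to the restriction of `x` to the subset `S`. -/
noncomputable def fSet (k n : ℕ) (S : Finset (Fin n)) (x : Fin n → Fin k) : ℝ :=
  ∑ i : Fin k, ∏ j ∈ S, ((if x j = i then (1 : ℝ) else 0) - 1 / (k : ℝ))

variable {ι α : Type*} [Fintype ι] [DecidableEq ι] [Fintype α]

lemma Fintype.sum_pi_prod_apply {R : Type*} [CommSemiring R] (S : Finset ι) (h : α → R) :
    ∑ x : ι → α, ∏ j ∈ S, h (x j) = (∑ a, h a) ^ #S * card α ^ (card ι - #S) := by
  calc ∑ x : ι → α, ∏ j ∈ S, h (x j)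
      = ∑ x : ι → α, ∏ j, if j ∈ S then h (x j) else 1 := by simp only [prod_ite_mem]
    _ = ∏ j, ∑ a, if j ∈ S then h a else 1 :=
        (Fintype.prod_sum fun j a => if j ∈ S then h a else 1).symm
    _ = (∏ _j ∈ S, ∑ a, h a) * ∏ _j ∈ Sᶜ, ∑ _a : α, 1 := by
        rw [← prod_mul_prod_compl S]
        congr 1 <;> refine Finset.prod_congr rfl fun j hj => ?_ <;> simp_all
    _ = _ := by simp [card_compl]

variable [DecidableEq α]

def centeredIndicator (K : Type*) [Field K] (i a : α) : K :=
  (if a = i then 1 else 0) - 1 / Fintype.card α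

variable {K : Type*} [Field K]

lemma sum_centeredIndicator_mul [CharZero K] (i i' : α) :
    ∑ a, centeredIndicator K i a * centeredIndicator K i' a = centeredIndicator K i i' := by
  have hα : (Fintype.card α : K) ≠ 0 := by exact_mod_cast (Fintype.card_pos_iff.2 ⟨i⟩).ne'
  simp only [centeredIndicator, sub_mul, mul_sub, sum_sub_distrib, ← sum_mul, ← mul_sum]
  simp only [eq_comm, mul_ite, mul_one, mul_zero, sum_ite_eq, mem_univ, ↓reduceIte, one_div,
    one_mul, sum_const, card_univ, nsmul_eq_mul]
  field_simp
  ring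

lemma sum_centeredIndicator_pow (i : α) (p : ℕ) :
    ∑ i', centeredIndicator K i i' ^ p
      = (1 - 1 / Fintype.card α) ^ p + (Fintype.card α - 1) * (-(1 / Fintype.card α)) ^ p := by
  have h_off_diag : ∀ i' ∈ ({i}ᶜ : Finset α), centeredIndicator K i i' = -(1 / Fintype.card α) := by
    intro i' hi'
    simp_all [centeredIndicator]
  rw [Fintype.sum_eq_add_sum_compl i, sum_congr rfl fun i' hi' => by rw [h_off_diag i' hi']]
  simp [centeredIndicator, card_compl, Nat.cast_pred (Fintype.card_pos_iff.2 ⟨i⟩)]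

lemma sum_pi_sum_prod_centeredIndicator_sq [CharZero K] (S : Finset ι) :
    ∑ x : ι → α, (∑ i, ∏ j ∈ S, centeredIndicator K i (x j)) ^ 2
      = ∑ i : α, ∑ i' : α,
          centeredIndicator K i i' ^ #S * Fintype.card α ^ (Fintype.card ι - #S) := by
  simp_rw [sq, sum_mul_sum, ← prod_mul_distrib]
  rw [sum_comm]
  refine sum_congr rfl fun i _ => ?_
  rw [sum_comm]
  refine sum_congr rfl fun i' _ => ?_
  rw [Fintype.sum_pi_prod_apply S fun a => centeredIndicator K i a * centeredIndicator K i' a,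
    sum_centeredIndicator_mul]

lemma fSet_eq_sum_prod_centeredIndicator (k n : ℕ) (S : Finset (Fin n)) (x : Fin n → Fin k) :
    fSet k n S x = ∑ i, ∏ j ∈ S, centeredIndicator ℝ i (x j) := by
  simp [fSet, centeredIndicator]

theorem stmt10_general (k p n : ℕ) (hk : 2 ≤ k) (hp : 2 ≤ p)
    (S : Finset (Fin n)) (hS : S.card = p) :
    (∑ x : Fin n → Fin k, (fSet k n S x) ^ 2) / (k : ℝ) ^ n
      = (((k : ℝ) - 1) ^ p + (-1 : ℝ) ^ p * ((k : ℝ) - 1)) / (k : ℝ) ^ (2 * p - 1) := by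
  have : NeZero k := ⟨by omega⟩
  simp_rw [fSet_eq_sum_prod_centeredIndicator]
  rw [sum_pi_sum_prod_centeredIndicator_sq]
  simp_rw [← sum_mul, sum_centeredIndicator_pow]
  simp only [sum_const, card_univ, Fintype.card_fin, hS, nsmul_eq_mul]
  obtain ⟨m, rfl⟩ := Nat.exists_eq_add_of_le (by simpa [hS] using card_le_univ S)
  obtain ⟨q, rfl⟩ : ∃ q, p = q + 1 := ⟨p - 1, by omega⟩
  rw [Nat.add_sub_cancel_left, show 2 * (q + 1) - 1 = 2 * q + 1 by omega]
  have hk0 : (k : ℝ) ≠ 0 := NeZero.ne _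
  rw [one_sub_div hk0, ← neg_div, div_pow, div_pow]
  field_simp
  ring

/-- For `x` uniform in `[k]^n` and a `p`-subset `S` of `[n]`,
`E[f(x_S)²] = ((k−1)^p + (−1)^p (k−1)) / k^{2p−1}`. -/
theorem stmt10 (k p n : ℕ) (hk : 2 ≤ k) (hp : 2 ≤ p) (hn : p ≤ n)
    (S : Finset (Fin n)) (hS : S.card = p) :
    (∑ x : Fin n → Fin k, (fSet k n S x) ^ 2) / (k : ℝ) ^ n
      = (((k : ℝ) - 1) ^ p + (-1 : ℝ) ^ p * ((k : ℝ) - 1)) / (k : ℝ) ^ (2 * p - 1) :=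
  stmt10_general k p n hk hp S hS
end

section
/- Let C, C' be drawn uniformly and independently from C_λ (tuples of λ pairwise-disjoint p-subsets of [n]), and let r(C, C') be the number of elements of [n] contained in both ⋃_i C_i and ⋃_i C'_i. Then the number of pairs with r(C,C') = r is at most |C_λ|² · C(λp, r) · (λp/n)^r. -/
open Finset

/-- The set of ordered tuples of `λ` pairwise-disjoint `p`-subsets of `[n]`. -/
def CSet (n p lam : ℕ) : Set (Fin lam → Finset (Fin n)) :=
  {t | (∀ i, (t i).card = p) ∧ ∀ i j, i ≠ j → Disjoint (t i) (t j)}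

/-!
Send a pair `(C, C')` with `|S(C) ∩ S(C')| = r` (where `S` is the support) to the triple
`(C, S(C) ∩ S(C'), C')`. Permutations of `[n]` act on `C_λ` and move supports along, so the
number `f` of tuples whose support contains a given `r`-set depends only on `r`, and double
counting pairs `(R, C)` with `R ⊆ S(C)` gives `C(n, r) f = |C_λ| C(λp, r)`. Hence there are
at most `|C_λ| C(λp, r) f = |C_λ|² C(λp, r)² / C(n, r)` such pairs, and
`C(λp, r) / C(n, r) ≤ (λp/n)^r`.
-/

open scoped Pointwise

theorem Nat.choose_mul_pow_le_choose_mul_pow {a b : ℕ} (hab : a ≤ b) (r : ℕ) :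
    a.choose r * b ^ r ≤ b.choose r * a ^ r := by
  have hdesc : a.descFactorial r * b ^ r ≤ b.descFactorial r * a ^ r := by
    induction r with
    | zero => simp
    | succ r ih =>
      have hstep : (a - r) * b ≤ (b - r) * a := by
        rw [Nat.sub_mul, Nat.sub_mul, mul_comm b a]
        exact Nat.sub_le_sub_left (Nat.mul_le_mul_left r hab) _
      rw [Nat.descFactorial_succ, Nat.descFactorial_succ, pow_succ, pow_succ]
      calc (a - r) * a.descFactorial r * (b ^ r * b)
          = ((a - r) * b) * (a.descFactorial r * b ^ r) := by ring
        _ ≤ ((b - r) * a) * (b.descFactorial r * a ^ r) := Nat.mul_le_mul hstep ih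
        _ = (b - r) * b.descFactorial r * (a ^ r * a) := by ring
  rw [Nat.descFactorial_eq_factorial_mul_choose, Nat.descFactorial_eq_factorial_mul_choose,
    mul_assoc, mul_assoc] at hdesc
  exact Nat.le_of_mul_le_mul_left hdesc r.factorial_pos

theorem Finset.exists_perm_smul_eq_of_card_eq {α : Type*} [DecidableEq α] {R R' : Finset α}
    (h : #R = #R') : ∃ σ : Equiv.Perm α, σ • R = R' := by
  have := Set.powersetCard.isPretransitive (α := α) (n := #R)
  obtain ⟨σ, hσ⟩ := MulAction.exists_smul_eq (Equiv.Perm α)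
    (⟨R, rfl⟩ : Set.powersetCard α #R) ⟨R', h.symm⟩
  exact ⟨σ, congrArg Subtype.val hσ⟩

theorem Finset.smul_finset_biUnion {G α ι : Type*} [DecidableEq α] [SMul G α] (g : G)
    (s : Finset ι) (t : ι → Finset α) : g • s.biUnion t = s.biUnion fun i => g • t i :=
  biUnion_image

namespace Finset

variable {α ι : Type*} [DecidableEq α] (s : Finset ι) (S : ι → Finset α)

theorem sum_card_filter_subset_eq_sum_choose [Fintype α] (r : ℕ) :
    ∑ R ∈ powersetCard r univ, #{c ∈ s | R ⊆ S c} = ∑ c ∈ s, (#(S c)).choose r := by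
  simp_rw [card_filter]
  rw [sum_comm]
  refine sum_congr rfl fun c _ => ?_
  rw [← card_filter, ← card_powersetCard]
  congr 1
  ext R
  simp only [mem_filter, mem_powersetCard, subset_univ, true_and]
  tauto

theorem card_filter_card_inter_eq_le_sum (r : ℕ) :
    #{x ∈ s ×ˢ s | #(S x.1 ∩ S x.2) = r}
      ≤ ∑ c ∈ s, ∑ R ∈ powersetCard r (S c), #{c' ∈ s | R ⊆ S c'} := by
  simp_rw [← card_sigma]
  refine card_le_card_of_injOn (fun x => ⟨x.1, S x.1 ∩ S x.2, x.2⟩) ?_ ?_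
  · intro x hx
    simp only [coe_filter, mem_product, Set.mem_ofPred_eq] at hx
    simp only [coe_sigma, Set.mem_sigma_iff, mem_coe, mem_powersetCard, mem_filter]
    exact ⟨hx.1.1, ⟨inter_subset_left, hx.2⟩, hx.1.2, inter_subset_right⟩
  · intro x _ y _ hxy
    exact Prod.ext (congrArg Sigma.fst hxy) (congrArg (fun z => z.2.2) hxy)

theorem card_filter_smul_subset_eq [MulAction (Equiv.Perm α) ι]
    (hs : ∀ σ : Equiv.Perm α, ∀ c ∈ s, σ • c ∈ s)
    (hS : ∀ (σ : Equiv.Perm α) c, S (σ • c) = σ • S c) (σ : Equiv.Perm α)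
    (R : Finset α) : #{c ∈ s | σ • R ⊆ S c} = #{c ∈ s | R ⊆ S c} := by
  refine card_nbij' (σ⁻¹ • ·) (σ • ·) ?_ ?_ ?_ ?_
  · intro c hc
    simp only [coe_filter, Set.mem_ofPred_eq] at hc ⊢
    refine ⟨hs _ c hc.1, ?_⟩
    rw [hS, ← smul_finset_subset_smul_finset_iff (a := σ), smul_inv_smul]
    exact hc.2
  · intro c hc
    simp only [coe_filter, Set.mem_ofPred_eq] at hc ⊢
    exact ⟨hs _ c hc.1, by rw [hS]; exact smul_finset_subset_smul_finset hc.2⟩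
  · intro c _
    exact smul_inv_smul σ c
  · intro c _
    exact inv_smul_smul σ c

theorem card_filter_subset_eq_of_card_eq [MulAction (Equiv.Perm α) ι]
    (hs : ∀ σ : Equiv.Perm α, ∀ c ∈ s, σ • c ∈ s)
    (hS : ∀ (σ : Equiv.Perm α) c, S (σ • c) = σ • S c) {R R' : Finset α} (h : #R = #R') :
    #{c ∈ s | R ⊆ S c} = #{c ∈ s | R' ⊆ S c} := by
  obtain ⟨σ, rfl⟩ := exists_perm_smul_eq_of_card_eq h
  exact (card_filter_smul_subset_eq s S hs hS σ R).symm

section UniformSupport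

variable [Fintype α] {s S} {m : ℕ}

theorem card_filter_card_inter_eq_mul_pow_le (hcard : ∀ c ∈ s, #(S c) = m)
    (hsymm : ∀ R R' : Finset α, #R = #R' → #{c ∈ s | R ⊆ S c} = #{c ∈ s | R' ⊆ S c})
    (hm : m ≤ Fintype.card α) {r : ℕ} (hr : r ≤ m) :
    #{x ∈ s ×ˢ s | #(S x.1 ∩ S x.2) = r} * Fintype.card α ^ r
      ≤ #s ^ 2 * m.choose r * m ^ r := by
  set n := Fintype.card α
  obtain ⟨R₀, -, hR₀⟩ := exists_subset_card_eq (s := (univ : Finset α)) (n := r)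
    (by rw [card_univ]; omega)
  set f := #{c ∈ s | R₀ ⊆ S c}
  have hf : ∀ R ∈ powersetCard r (univ : Finset α), #{c ∈ s | R ⊆ S c} = f :=
    fun R hR => hsymm R R₀ ((mem_powersetCard.mp hR).2.trans hR₀.symm)
  have hdouble : n.choose r * f = #s * m.choose r := by
    have hsum : ∑ c ∈ s, (#(S c)).choose r = #s * m.choose r := by
      rw [sum_congr rfl fun c hc => by rw [hcard c hc], sum_const, smul_eq_mul]
    rw [← hsum, ← sum_card_filter_subset_eq_sum_choose, sum_congr rfl hf, sum_const,
      card_powersetCard, card_univ, smul_eq_mul]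
  have hpairs : #{x ∈ s ×ˢ s | #(S x.1 ∩ S x.2) = r} ≤ #s * m.choose r * f := by
    refine (card_filter_card_inter_eq_le_sum s S r).trans_eq ?_
    rw [mul_assoc, ← smul_eq_mul, ← sum_const]
    refine sum_congr rfl fun c hc => ?_
    rw [sum_congr rfl fun R hR => hf R (powersetCard_mono (subset_univ _) hR), sum_const,
      card_powersetCard, hcard c hc, smul_eq_mul]
  have hf_le : f * n ^ r ≤ #s * m ^ r := by
    refine Nat.le_of_mul_le_mul_left ?_ (Nat.choose_pos (hr.trans hm))
    calc n.choose r * (f * n ^ r) = #s * (m.choose r * n ^ r) := by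
          rw [← mul_assoc, hdouble, mul_assoc]
      _ ≤ #s * (n.choose r * m ^ r) :=
          Nat.mul_le_mul_left _ (Nat.choose_mul_pow_le_choose_mul_pow hm r)
      _ = n.choose r * (#s * m ^ r) := by ring
  calc #{x ∈ s ×ˢ s | #(S x.1 ∩ S x.2) = r} * n ^ r ≤ #s * m.choose r * f * n ^ r :=
        Nat.mul_le_mul_right _ hpairs
    _ = #s * m.choose r * (f * n ^ r) := mul_assoc _ _ _
    _ ≤ #s * m.choose r * (#s * m ^ r) := Nat.mul_le_mul_left _ hf_le
    _ = #s ^ 2 * m.choose r * m ^ r := by ring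

theorem card_filter_card_inter_eq_le (hcard : ∀ c ∈ s, #(S c) = m)
    (hsymm : ∀ R R' : Finset α, #R = #R' → #{c ∈ s | R ⊆ S c} = #{c ∈ s | R' ⊆ S c})
    (hm : m ≤ Fintype.card α) (r : ℕ) :
    (#{x ∈ s ×ˢ s | #(S x.1 ∩ S x.2) = r} : ℝ)
      ≤ #s ^ 2 * m.choose r * ((m : ℝ) / Fintype.card α) ^ r := by
  by_cases hr : r ≤ m
  · have hpos : (0 : ℝ) < (Fintype.card α : ℝ) ^ r := by
      exact_mod_cast (Nat.choose_pos (hr.trans hm)).trans_le (Nat.choose_le_pow _ _)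
    rw [div_pow, ← mul_div_assoc, le_div_iff₀ hpos]
    exact_mod_cast card_filter_card_inter_eq_mul_pow_le hcard hsymm hm hr
  · have hempty : {x ∈ s ×ˢ s | #(S x.1 ∩ S x.2) = r} = ∅ := by
      refine filter_false_of_mem fun x hx hcard' => hr ?_
      rw [← hcard', ← hcard x.1 (mem_product.mp hx).1]
      exact card_le_card inter_subset_left
    rw [hempty, card_empty, Nat.cast_zero]
    positivity

end UniformSupport

end Finset

theorem smul_mem_CSet {n p lam : ℕ} (σ : Equiv.Perm (Fin n)) {t : Fin lam → Finset (Fin n)}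
    (ht : t ∈ CSet n p lam) : σ • t ∈ CSet n p lam :=
  ⟨fun i => (card_smul_finset σ (t i)).trans (ht.1 i),
    fun i j hij => (disjoint_image σ.injective).mpr (ht.2 i j hij)⟩

theorem card_biUnion_of_mem_CSet {n p lam : ℕ} {t : Fin lam → Finset (Fin n)}
    (ht : t ∈ CSet n p lam) : #(univ.biUnion t) = lam * p := by
  rw [card_biUnion fun i _ j _ hij => ht.2 i j hij]
  simp [ht.1, mul_comm]

theorem stmt14_general (p lam n r : ℕ) (hln : lam * p ≤ n) :
    (Nat.card {tt : (Fin lam → Finset (Fin n)) × (Fin lam → Finset (Fin n)) //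
          tt.1 ∈ CSet n p lam ∧ tt.2 ∈ CSet n p lam ∧
          ((Finset.univ.biUnion tt.1) ∩ (Finset.univ.biUnion tt.2)).card = r} : ℝ)
      ≤ (Nat.card (CSet n p lam) : ℝ) ^ 2 * (Nat.choose (lam * p) r : ℝ) *
          ((lam * p : ℝ) / (n : ℝ)) ^ r := by
  classical
  set s : Finset (Fin lam → Finset (Fin n)) := {t | t ∈ CSet n p lam}
  have mem_s (t) : t ∈ s ↔ t ∈ CSet n p lam := by simp [s]
  have hsymm (R R' : Finset (Fin n)) (h : #R = #R') :
      #{t ∈ s | R ⊆ univ.biUnion t} = #{t ∈ s | R' ⊆ univ.biUnion t} :=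
    card_filter_subset_eq_of_card_eq s _
      (fun σ t ht => (mem_s _).2 (smul_mem_CSet σ ((mem_s t).1 ht)))
      (fun σ t => (smul_finset_biUnion σ univ t).symm) h
  have key := card_filter_card_inter_eq_le
    (fun t ht => card_biUnion_of_mem_CSet ((mem_s t).1 ht)) hsymm (by simpa using hln) r
  rw [Fintype.card_fin, Nat.cast_mul] at key
  rw [Nat.card_eq_card_toFinset, Nat.card_eq_fintype_card, Fintype.card_subtype]
  convert key using 3
  · ext x
    simp only [mem_filter, mem_univ, true_and, mem_product, mem_s, and_assoc]
  · congr 3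
    ext t
    simp [mem_s]

/-- The number of pairs `(C, C') ∈ C_λ²` whose supports overlap in exactly `r`
elements is at most `|C_λ|² · C(λp, r) · (λp/n)^r`. -/
theorem stmt14 (p lam n r : ℕ) (hp : 2 ≤ p) (hlam : 1 ≤ lam) (hln : lam * p ≤ n) :
    (Nat.card {tt : (Fin lam → Finset (Fin n)) × (Fin lam → Finset (Fin n)) //
          tt.1 ∈ CSet n p lam ∧ tt.2 ∈ CSet n p lam ∧
          ((Finset.univ.biUnion tt.1) ∩ (Finset.univ.biUnion tt.2)).card = r} : ℝ)
      ≤ (Nat.card (CSet n p lam) : ℝ) ^ 2 * (Nat.choose (lam * p) r : ℝ) *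
          ((lam * p : ℝ) / (n : ℝ)) ^ r :=
  stmt14_general p lam n r hln
end

section
/- Suppose identically distributed independent real random variables (A_S) satisfy, after a further averaging over a latent variable x: E_x E[A_S] = 0, E_x (E[A_S])² = β²μ, E_x E[A_S²] = 1, and the covariance structure of Lemma on product covariances. Then for the covariance W(a,b) = Cov(Π_{i≤a} A_{S_i} Π_{j≤b} A_{S'_j}, Π_{i≤a} A_{S_i} Π_{j≤b} A_{S''_j}) over distinct index sets with a + b = λ, we have E_x W(a,b) = 0 when b ≥ 1, and E_x W(λ, 0) = 1 − (β²μ)^λ. -/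
/-!
Conditional on `x`, `W(a,b)` is the difference of two products of functions of the pairwise
distinct coordinates `x (S i)`, `x (S' j)`, `x (S'' j)`. Averaging over independent uniform
coordinates turns each such product into the product of the averages, so
`E_x W(a,b) = (E q)^a (E m)^(2b) - (E m²)^a (E m)^(2b) = 1^a 0^(2b) - (β²μ)^a 0^(2b)`.
-/

open Finset Function

theorem Fintype.sum_prod_comp_injective_div_card_pow {ι κ X R : Type*} [Fintype ι]
    [DecidableEq ι] [Fintype κ] [Fintype X] [Semifield R] (hX : (Fintype.card X : R) ≠ 0)
    {T : κ → ι} (hT : Injective T) (f : κ → X → R) :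
    (∑ x : ι → X, ∏ k, f k (x (T k))) / (Fintype.card X : R) ^ Fintype.card ι =
      ∏ k, (∑ v, f k v) / Fintype.card X := by
  set G : ι → X → R := extend T f 1
  have hG_off : ∀ i ∉ Set.range T, G i = 1 := fun i hi => extend_apply' _ _ _ hi
  have hG_on : ∀ k, G (T k) = f k := hT.extend_apply f 1
  have hprod : ∀ x : ι → X, ∏ k, f k (x (T k)) = ∏ i, G i (x i) := fun x =>
    Fintype.prod_of_injective T hT _ _ (fun i hi => by simp [hG_off i hi])
      (fun k => by rw [hG_on])
  calc (∑ x : ι → X, ∏ k, f k (x (T k))) / (Fintype.card X : R) ^ Fintype.card ι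
      = (∏ i, ∑ v, G i v) / (Fintype.card X : R) ^ Fintype.card ι := by
        simp_rw [hprod, Fintype.prod_sum]
    _ = ∏ i, (∑ v, G i v) / Fintype.card X := by
        rw [prod_div_distrib, prod_const, card_univ]
    _ = ∏ k, (∑ v, f k v) / Fintype.card X :=
        (Fintype.prod_of_injective T hT _ _
          (fun i hi => by simp [hG_off i hi, hX]) (fun k => by rw [hG_on])).symm

theorem stmt19_general {ι X : Type*} [Fintype ι] [DecidableEq ι] [Fintype X] [Nonempty X]
    (m q : X → ℝ) (β μpar : ℝ)
    (hm : (∑ v : X, m v) / (Fintype.card X : ℝ) = 0)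
    (hm2 : (∑ v : X, (m v) ^ 2) / (Fintype.card X : ℝ) = β ^ 2 * μpar)
    (hq : (∑ v : X, q v) / (Fintype.card X : ℝ) = 1)
    (lam a b : ℕ) (hab : a + b = lam)
    (S : Fin a → ι) (S' S'' : Fin b → ι)
    (hinj : Function.Injective
      (Sum.elim S (Sum.elim S' S'') : Fin a ⊕ (Fin b ⊕ Fin b) → ι)) :
    (1 ≤ b →
      (∑ x : ι → X, (∏ j : Fin b, m (x (S' j)) * m (x (S'' j))) *
          ((∏ i : Fin a, q (x (S i))) - ∏ i : Fin a, (m (x (S i))) ^ 2))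
        / (Fintype.card X : ℝ) ^ (Fintype.card ι) = 0)
    ∧ (b = 0 →
      (∑ x : ι → X, (∏ j : Fin b, m (x (S' j)) * m (x (S'' j))) *
          ((∏ i : Fin a, q (x (S i))) - ∏ i : Fin a, (m (x (S i))) ^ 2))
        / (Fintype.card X : ℝ) ^ (Fintype.card ι) = 1 - (β ^ 2 * μpar) ^ lam) := by
  have hX : (Fintype.card X : ℝ) ≠ 0 := Nat.cast_ne_zero.2 Fintype.card_ne_zero
  set T := Sum.elim S (Sum.elim S' S'')
  have hsplit : ∀ x : ι → X,
      (∏ j, m (x (S' j)) * m (x (S'' j))) *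
          ((∏ i, q (x (S i))) - ∏ i, m (x (S i)) ^ 2) =
        ∏ k, Sum.elim (fun _ => q) (Sum.elim (fun _ => m) (fun _ => m)) k (x (T k)) -
          ∏ k, Sum.elim (fun _ v => m v ^ 2) (Sum.elim (fun _ => m) (fun _ => m)) k
            (x (T k)) := by
    intro x
    simp only [T, Fintype.prod_sum_type, Sum.elim_inl, Sum.elim_inr, prod_mul_distrib]
    ring
  have hmean : (∑ x : ι → X, (∏ j, m (x (S' j)) * m (x (S'' j))) *
          ((∏ i, q (x (S i))) - ∏ i, m (x (S i)) ^ 2)) / (Fintype.card X : ℝ) ^ Fintype.card ι =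
        1 ^ a * (0 ^ b * 0 ^ b) - (β ^ 2 * μpar) ^ a * (0 ^ b * 0 ^ b) := by
    rw [sum_congr rfl fun x _ => hsplit x, sum_sub_distrib, sub_div,
      Fintype.sum_prod_comp_injective_div_card_pow hX hinj,
      Fintype.sum_prod_comp_injective_div_card_pow hX hinj]
    simp only [Fintype.prod_sum_type, Sum.elim_inl, Sum.elim_inr, hq, hm, hm2, prod_const,
      card_univ, Fintype.card_fin]
  rw [hmean]
  refine ⟨fun hb => by simp [zero_pow (by omega : b ≠ 0)], fun hb => ?_⟩
  subst hb hab
  simp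

/-- Expectation over the latent variable of the covariance `W(a,b)`:
conditional on `x`, the variables are independent with conditional means `m (x S)`
and conditional second moments `q (x S)`; under the moment dictionary
`E_x m = 0`, `E_x m² = β²μ`, `E_x q = 1`, the covariance
`W(a,b) = (∏_j m(x_{S'_j}) m(x_{S''_j})) (∏_i q(x_{S_i}) − ∏_i m(x_{S_i})²)`
satisfies `E_x W(a,b) = 0` when `b ≥ 1`, and `E_x W(λ,0) = 1 − (β²μ)^λ`. -/
theorem stmt19 {ι X : Type*} [Fintype ι] [DecidableEq ι] [Fintype X] [Nonempty X]
    (m q : X → ℝ) (β μpar : ℝ) (hβ : 0 < β) (hμ : 0 < μpar)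
    (hm : (∑ v : X, m v) / (Fintype.card X : ℝ) = 0)
    (hm2 : (∑ v : X, (m v) ^ 2) / (Fintype.card X : ℝ) = β ^ 2 * μpar)
    (hq : (∑ v : X, q v) / (Fintype.card X : ℝ) = 1)
    (lam a b : ℕ) (hab : a + b = lam)
    (S : Fin a → ι) (S' S'' : Fin b → ι)
    (hinj : Function.Injective
      (Sum.elim S (Sum.elim S' S'') : Fin a ⊕ (Fin b ⊕ Fin b) → ι)) :
    (1 ≤ b →
      (∑ x : ι → X, (∏ j : Fin b, m (x (S' j)) * m (x (S'' j))) *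
          ((∏ i : Fin a, q (x (S i))) - ∏ i : Fin a, (m (x (S i))) ^ 2))
        / (Fintype.card X : ℝ) ^ (Fintype.card ι) = 0)
    ∧ (b = 0 →
      (∑ x : ι → X, (∏ j : Fin b, m (x (S' j)) * m (x (S'' j))) *
          ((∏ i : Fin a, q (x (S i))) - ∏ i : Fin a, (m (x (S i))) ^ 2))
        / (Fintype.card X : ℝ) ^ (Fintype.card ι) = 1 - (β ^ 2 * μpar) ^ lam) :=
  stmt19_general m q β μpar hm hm2 hq lam a b hab S S' S'' hinj
end
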